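/- arXiv:2001.11425 — 2 statements merged into one kernel-verified Lean document; each statement's English description precedes it below -/
import Mathlib

section
/- For the simplified gradient of the negative log-likelihood in θ: 2 Hᵀ Σ⁻¹ (Hθ − y) = −2σ⁻²(Hᵀ y − Hᵀ H θ) + 2σ⁻² Hᵀ B Eᵀ E (Bᵀ y − Bᵀ H θ), where Σ = B C Cᵀ Bᵀ + σ² I and E = L⁻¹ Cᵀ with L Lᵀ = σ² I_r + Cᵀ Bᵀ B C. -/
open Matrix

theorem stmt8 (m k r p : ℕ) (H : Matrix (Fin m) (Fin p) ℝ)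
    (B : Matrix (Fin m) (Fin k) ℝ) (C : Matrix (Fin k) (Fin r) ℝ)
    (θ : Fin p → ℝ) (y : Fin m → ℝ) (σ2 : ℝ) (hσ : 0 < σ2)
    (L : Matrix (Fin r) (Fin r) ℝ) (hL : IsUnit L.det)
    (hLL : L * Lᵀ = σ2 • (1 : Matrix (Fin r) (Fin r) ℝ) + Cᵀ * Bᵀ * B * C) :
    (2 : ℝ) • (Hᵀ *ᵥ ((B * C * Cᵀ * Bᵀ + σ2 • (1 : Matrix (Fin m) (Fin m) ℝ))⁻¹ *ᵥ
        (H *ᵥ θ - y))) =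
      (-(2 * σ2⁻¹)) • (Hᵀ *ᵥ y - Hᵀ *ᵥ (H *ᵥ θ)) +
        (2 * σ2⁻¹) • ((Hᵀ * B * (L⁻¹ * Cᵀ)ᵀ * (L⁻¹ * Cᵀ)) *ᵥ
          (Bᵀ *ᵥ y - Bᵀ *ᵥ (H *ᵥ θ))) := by
  set M : Matrix (Fin r) (Fin r) ℝ := σ2 • (1 : Matrix (Fin r) (Fin r) ℝ) + Cᵀ * Bᵀ * B * C with hMdef
  have hM : L * Lᵀ = M := hLL
  have hMu : IsUnit M.det := by
    rw [← hM, Matrix.det_mul, Matrix.det_transpose]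
    exact hL.mul hL
  have hkey : (B * C * Cᵀ * Bᵀ + σ2 • (1 : Matrix (Fin m) (Fin m) ℝ)) * (B * C)
      = B * C * M := by
    rw [hMdef]
    simp only [Matrix.add_mul, Matrix.mul_add, Matrix.smul_mul, Matrix.mul_smul,
      Matrix.one_mul, Matrix.mul_one]
    rw [add_comm]
    simp only [Matrix.mul_assoc]
  have hinv : (B * C * Cᵀ * Bᵀ + σ2 • (1 : Matrix (Fin m) (Fin m) ℝ))⁻¹
      = σ2⁻¹ • ((1 : Matrix (Fin m) (Fin m) ℝ) - B * C * M⁻¹ * Cᵀ * Bᵀ) := by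
    apply Matrix.inv_eq_right_inv
    rw [Matrix.mul_smul, Matrix.mul_sub, Matrix.mul_one]
    have h2 : (B * C * Cᵀ * Bᵀ + σ2 • (1 : Matrix (Fin m) (Fin m) ℝ)) * (B * C * M⁻¹ * Cᵀ * Bᵀ)
        = B * C * Cᵀ * Bᵀ := by
      calc (B * C * Cᵀ * Bᵀ + σ2 • (1 : Matrix (Fin m) (Fin m) ℝ)) * (B * C * M⁻¹ * Cᵀ * Bᵀ)
          = ((B * C * Cᵀ * Bᵀ + σ2 • (1 : Matrix (Fin m) (Fin m) ℝ)) * (B * C)) * M⁻¹ * Cᵀ * Bᵀ := by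
            simp only [Matrix.mul_assoc]
        _ = B * C * M * M⁻¹ * Cᵀ * Bᵀ := by rw [hkey]
        _ = B * C * Cᵀ * Bᵀ := by
            rw [Matrix.mul_assoc (B * C), Matrix.mul_nonsing_inv _ hMu, Matrix.mul_one]
    rw [h2]
    simp only [add_sub_cancel_left]
    rw [smul_smul, inv_mul_cancel₀ (ne_of_gt hσ), one_smul]
  have hE : (L⁻¹ * Cᵀ)ᵀ * (L⁻¹ * Cᵀ) = C * M⁻¹ * Cᵀ := by
    rw [Matrix.transpose_mul, Matrix.transpose_transpose, Matrix.transpose_nonsing_inv]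
    calc C * Lᵀ⁻¹ * (L⁻¹ * Cᵀ) = C * (Lᵀ⁻¹ * L⁻¹) * Cᵀ := by simp only [Matrix.mul_assoc]
      _ = C * M⁻¹ * Cᵀ := by rw [← Matrix.mul_inv_rev, hM]
  rw [hinv, Matrix.mul_assoc (Hᵀ * B), hE]
  simp only [Matrix.smul_mulVec, Matrix.mulVec_smul, Matrix.smul_mul, Matrix.mul_smul,
    Matrix.sub_mul, Matrix.mul_sub, Matrix.one_mul, Matrix.mul_one, Matrix.sub_mulVec,
    Matrix.mulVec_sub, Matrix.one_mulVec, Matrix.mulVec_mulVec, Matrix.mul_assoc]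
  module
end

section
/- log det(B C Cᵀ Bᵀ + σ² I_m) = 2 Σ_j log (F)_{jj} + m log σ², where F is the lower-triangular Cholesky factor with positive diagonal of I_r + σ⁻² Cᵀ Bᵀ B C. -/
/-! The shifted Gram matrix `B C (B C)ᵀ + σ² I_m` factors as `σ² (I_m + σ⁻² (B C)(B C)ᵀ)`, and the
Weinstein–Aronszajn identity trades the `m × m` determinant for the `r × r` one of
`I_r + σ⁻² (B C)ᵀ(B C) = F Fᵀ`, whose determinant is `∏ F_jj²` since `F` is triangular. -/

open Matrix

namespace Matrix

variable {m n : Type*} [Fintype m] [Fintype n] [DecidableEq m] [DecidableEq n]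

theorem det_mul_add_smul_one {K : Type*} [Field K] (A : Matrix m n K) (B : Matrix n m K)
    {c : K} (hc : c ≠ 0) :
    (A * B + c • (1 : Matrix m m K)).det = c ^ Fintype.card m * (1 + c⁻¹ • (B * A)).det := by
  have hfactor : A * B + c • (1 : Matrix m m K) = c • (1 + (c⁻¹ • A) * B) := by
    rw [smul_add, add_comm, Matrix.smul_mul, smul_smul, mul_inv_cancel₀ hc, one_smul]
  rw [hfactor, det_smul, det_one_add_mul_comm, Matrix.mul_smul]

theorem det_mul_transpose_of_isLowerTriangular {R : Type*} [CommRing R] [LinearOrder n]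
    {F : Matrix n n R} (hF : F.IsLowerTriangular) :
    (F * Fᵀ).det = ∏ i, F i i ^ 2 := by
  rw [det_mul, det_transpose, ← sq, det_of_isLowerTriangular F hF, Finset.prod_pow]

end Matrix

theorem stmt18 (m k r : ℕ) (B : Matrix (Fin m) (Fin k) ℝ) (C : Matrix (Fin k) (Fin r) ℝ)
    (σ2 : ℝ) (hσ : 0 < σ2) (F : Matrix (Fin r) (Fin r) ℝ)
    (hlow : ∀ i j : Fin r, i < j → F i j = 0) (hdiag : ∀ i : Fin r, 0 < F i i)
    (hFF : F * Fᵀ = (1 : Matrix (Fin r) (Fin r) ℝ) + σ2⁻¹ • (Cᵀ * Bᵀ * B * C)) :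
    Real.log ((B * C * Cᵀ * Bᵀ + σ2 • (1 : Matrix (Fin m) (Fin m) ℝ)).det) =
      2 * ∑ j : Fin r, Real.log (F j j) + (m : ℝ) * Real.log σ2 := by
  have hgram : B * C * Cᵀ * Bᵀ = (B * C) * (B * C)ᵀ := by
    simp only [transpose_mul, Matrix.mul_assoc]
  have hcogram : (B * C)ᵀ * (B * C) = Cᵀ * Bᵀ * B * C := by
    simp only [transpose_mul, Matrix.mul_assoc]
  have hdetFF : (F * Fᵀ).det = ∏ j, F j j ^ 2 :=
    det_mul_transpose_of_isLowerTriangular fun i j hij => hlow i j hij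
  rw [hgram, det_mul_add_smul_one _ _ hσ.ne', hcogram, ← hFF, hdetFF, Fintype.card_fin,
    Real.log_mul (pow_ne_zero _ hσ.ne')
      (Finset.prod_ne_zero_iff.mpr fun j _ => pow_ne_zero _ (hdiag j).ne'),
    Real.log_prod fun j _ => pow_ne_zero _ (hdiag j).ne']
  simp only [Real.log_pow, Finset.mul_sum]
  push_cast
  ring
end
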